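/- arXiv:math/0701073 — 5 statements merged into one kernel-verified Lean document; each statement's English description precedes it below -/
import Mathlib

section
/- Given any C-vector subspace V ⊂ F of finite dimension n, there is a unique monic differential operator P_V = a_0 + a_1∂ + ⋯ + a_{n−1}∂^{n−1} + ∂^n of degree n such that Zer(P_V) = V. -/
/-!
If `y₁, …, yₘ ∈ F` are linearly independent over the constants, their Wronskian matrix
`(yⱼ⁽ⁱ⁾)` is invertible over `F`. Take an `F`-linear relation `∑ cⱼ yⱼ⁽ⁱ⁾ = 0` (`i < m`); if
`cₘ = 0` it vanishes by induction on `m`. Otherwise normalise it to `cₘ = 1` and differentiate: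
the relations for `i` and `i + 1` leave `∑_{j < m} cⱼ' yⱼ⁽ⁱ⁾ = 0` for `i < m - 1`, so by induction
all `cⱼ` are constants, and the relation for `i = 0` contradicts independence.

Take a basis `y₁, …, yₙ` of `V`. A monic operator `∂ⁿ + ∑ aᵢ ∂ⁱ` kills every `yⱼ` iff
`a · W = -(yⱼ⁽ⁿ⁾)ⱼ` for the Wronskian matrix `W`, which has exactly one solution. Its zeros form
a subspace containing `V`, and any zero outside `V` would extend `y` to an independent family of
`n + 1` zeros, whose Wronskian matrix would be singular with `(a, 1)` in its left kernel.
-/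

open Finset

/-- A derivation on a field `F`. -/
structure IsDerivation {F : Type*} [Field F] (d : F → F) : Prop where
  map_add : ∀ a b : F, d (a + b) = d a + d b
  leibniz : ∀ a b : F, d (a * b) = d a * b + a * d b

namespace IsDerivation

variable {F : Type*} [Field F] {d : F → F}

theorem map_zero' (hd : IsDerivation d) : d 0 = 0 := by
  have h := hd.map_add 0 0
  simp only [add_zero] at h
  exact (left_eq_add.mp h)

theorem map_one' (hd : IsDerivation d) : d 1 = 0 := by
  have h := hd.leibniz 1 1
  simp only [mul_one, one_mul] at h
  exact (left_eq_add.mp h)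

theorem map_neg' (hd : IsDerivation d) (a : F) : d (-a) = - d a := by
  have h := hd.map_add a (-a)
  simp only [add_neg_cancel, hd.map_zero'] at h
  exact (neg_eq_of_add_eq_zero_right h.symm).symm

end IsDerivation

/-- The subfield of constants of a derivation. -/
def constants (F : Type*) [Field F] (d : F → F) (hd : IsDerivation d) : Subfield F where
  carrier := {a : F | d a = 0}
  zero_mem' := hd.map_zero'
  one_mem' := hd.map_one'
  add_mem' := by
    intro a b ha hb
    simp only [Set.mem_setOf_eq] at *
    rw [hd.map_add, ha, hb, add_zero]
  neg_mem' := by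
    intro a ha
    simp only [Set.mem_setOf_eq] at *
    rw [hd.map_neg', ha, neg_zero]
  mul_mem' := by
    intro a b ha hb
    simp only [Set.mem_setOf_eq] at *
    rw [hd.leibniz, ha, hb, zero_mul, mul_zero, add_zero]
  inv_mem' := by
    intro a ha
    simp only [Set.mem_setOf_eq] at *
    by_cases h0 : a = 0
    · rw [h0, inv_zero]; exact hd.map_zero'
    · have h := hd.leibniz a a⁻¹
      rw [mul_inv_cancel₀ h0, hd.map_one', ha, zero_mul, zero_add] at h
      have h2 : a * d a⁻¹ = 0 := h.symm
      rcases mul_eq_zero.mp h2 with h3 | h3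
      · exact absurd h3 h0
      · exact h3
/-- `A` is the ring of differential operators `F⟨∂⟩` over the differential field `(F, d)`:
it contains `F` via `ι`, an element `δ` (the symbol `∂`) satisfying `∂a = a∂ + a'`, and every
element has a unique expression `Σ ι(aᵢ) ∂^i`. -/
structure IsDiffOpRing {F : Type*} [Field F] (d : F → F) (A : Type*) [Ring A]
    (ι : F →+* A) (δ : A) : Prop where
  comm : ∀ a : F, δ * ι a = ι a * δ + ι (d a)
  repr : ∀ P : A, ∃! c : ℕ →₀ F, P = c.sum fun i x => ι x * δ ^ i

/-- The action of the differential operator with coefficients `a 0, …, a n`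
(i.e. `Σ_{i ≤ n} aᵢ ∂^i`) on an element `y` of `F`. -/
def diffOpAct {F : Type*} [Field F] (d : F → F) (n : ℕ) (a : ℕ → F) (y : F) : F :=
  ∑ i ∈ Finset.range (n + 1), a i * d^[i] y

/-- A differential field is linearly differentially closed if every differential operator of
positive degree has a nonzero zero. -/
def LinDiffClosed {F : Type*} [Field F] (d : F → F) : Prop :=
  ∀ (n : ℕ) (a : ℕ → F), 0 < n → a n ≠ 0 → ∃ y : F, y ≠ 0 ∧ diffOpAct d n a y = 0

/-- `P ∈ F⟨∂⟩` has degree `n`, i.e. `P = Σ_{i ≤ n} ι(aᵢ) δ^i` with `aₙ ≠ 0`. -/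
def HasDeg {F : Type*} [Field F] {A : Type*} [Ring A] (ι : F →+* A) (δ : A)
    (P : A) (n : ℕ) : Prop :=
  ∃ a : ℕ → F, a n ≠ 0 ∧ P = ∑ i ∈ Finset.range (n + 1), ι (a i) * δ ^ i

/-- `K` is the division ring of quotients of the (Ore) domain `A`: `A` embeds in `K` via `j`
and every element of `K` has the form `P⁻¹ Q` with `P, Q ∈ A`, `P ≠ 0`. -/
structure IsQuotientDivisionRing (A : Type*) [Ring A] (K : Type*) [DivisionRing K]
    (j : A →+* K) : Prop where
  inj : Function.Injective j
  quot : ∀ f : K, ∃ P Q : A, P ≠ 0 ∧ f = (j P)⁻¹ * j Q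

/-- `f = P⁻¹ Q` is a minimal presentation of `f ∈ F(∂)`: a presentation where `P` has the
smallest possible degree. -/
def IsMinPres {F : Type*} [Field F] {A : Type*} [Ring A] (ι : F →+* A) (δ : A)
    {K : Type*} [DivisionRing K] (j : A →+* K) (f : K) (P Q : A) : Prop :=
  P ≠ 0 ∧ f = (j P)⁻¹ * j Q ∧
    ∀ (P' Q' : A) (n n' : ℕ), P' ≠ 0 → f = (j P')⁻¹ * j Q' →
      HasDeg ι δ P n → HasDeg ι δ P' n' → n ≤ n'

theorem Submodule.span_range_subtype_basis {R M : Type*} [Ring R] [AddCommGroup M] [Module R M]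
    {ι : Type*} {V : Submodule R M} (b : Module.Basis ι R V) :
    Submodule.span R (Set.range fun i => (b i : M)) = V := by
  rw [Set.range_comp' .., ← V.coe_subtype, ← Submodule.map_span, b.span_eq, Submodule.map_top,
    Submodule.range_subtype]

namespace IsDerivation

variable {F : Type*} [Field F] {d : F → F}

def toLinearMap (hd : IsDerivation d) : Module.End (constants F d hd) F where
  toFun := d
  map_add' := hd.map_add
  map_smul' c x := by
    change d (c * x) = c * d x
    rw [hd.leibniz, show d c = 0 from c.2, zero_mul, zero_add]

@[simp]
theorem coe_toLinearMap (hd : IsDerivation d) : ⇑hd.toLinearMap = d := rfl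

theorem map_sum_mul (hd : IsDerivation d) {ι : Type*} (s : Finset ι) (e x : ι → F) :
    d (∑ j ∈ s, e j * x j) = ∑ j ∈ s, d (e j) * x j + ∑ j ∈ s, e j * d (x j) := by
  rw [← hd.coe_toLinearMap, map_sum, ← Finset.sum_add_distrib]
  exact Finset.sum_congr rfl fun j _ => hd.leibniz _ _

theorem eq_zero_of_sum_mul_iterate_eq_zero (hd : IsDerivation d) {m : ℕ} {y : Fin m → F}
    (hy : LinearIndependent (constants F d hd) y) (c : Fin m → F)
    (hc : ∀ i < m, ∑ j, c j * d^[i] (y j) = 0) : c = 0 := by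
  induction m with
  | zero => exact Subsingleton.elim c 0
  | succ k ih =>
    have hy' := hy.comp _ (Fin.castSucc_injective k)
    have hlast : c (Fin.last k) = 0 := by
      by_contra hck
      set e : Fin (k + 1) → F := fun j => (c (Fin.last k))⁻¹ * c j with he_def
      have he_last : e (Fin.last k) = 1 := inv_mul_cancel₀ hck
      have he : ∀ i < k + 1, ∑ j, e j * d^[i] (y j) = 0 := fun i hi => by
        simp only [he_def, mul_assoc, ← Finset.mul_sum, hc i hi, mul_zero]
      have hde : ∀ j, d (e j) = 0 := by
        have hrel := ih hy' (fun j => d (e j.castSucc)) fun i hi => by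
          have h := hd.map_sum_mul Finset.univ e fun j => d^[i] (y j)
          simp only [he i (by omega), hd.map_zero', ← Function.iterate_succ_apply' d,
            he (i + 1) (by omega), add_zero, Fin.sum_univ_castSucc, he_last, hd.map_one',
            zero_mul] at h
          exact h.symm
        exact Fin.lastCases (he_last ▸ hd.map_one') fun j => congrFun hrel j
      have hrel := Fintype.linearIndependent_iff.mp hy (fun j => ⟨e j, hde j⟩)
        (he 0 (Nat.succ_pos k)) (Fin.last k)
      exact one_ne_zero (he_last.symm.trans (congrArg Subtype.val hrel))
    have hinit := ih hy' (fun j => c j.castSucc) fun i hi => by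
      simpa only [Fin.sum_univ_castSucc, hlast, zero_mul, add_zero, Function.comp_apply]
        using hc i (by omega)
    funext j
    exact Fin.lastCases hlast (fun j => congrFun hinit j) j

end IsDerivation

section

open Matrix

variable {F : Type*} [Field F] {d : F → F}

def wronskianMatrix (d : F → F) {m : ℕ} (y : Fin m → F) : Matrix (Fin m) (Fin m) F :=
  Matrix.of fun i j => d^[i] (y j)

theorem vecMul_wronskianMatrix_apply {m : ℕ} (a : Fin m → F) (y : Fin m → F) (j : Fin m) :
    (a ᵥ* wronskianMatrix d y) j = ∑ i, a i * d^[i] (y j) := rfl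

theorem isUnit_wronskianMatrix (hd : IsDerivation d) {m : ℕ} {y : Fin m → F}
    (hy : LinearIndependent (constants F d hd) y) : IsUnit (wronskianMatrix d y) := by
  refine Matrix.mulVec_injective_iff_isUnit.mp fun c c' h => sub_eq_zero.mp ?_
  refine hd.eq_zero_of_sum_mul_iterate_eq_zero hy (c - c') fun i hi => ?_
  have := congrFun h ⟨i, hi⟩
  simp only [Matrix.mulVec, dotProduct, wronskianMatrix, Matrix.of_apply] at this
  simp only [Pi.sub_apply, sub_mul, Finset.sum_sub_distrib, sub_eq_zero]
  simpa only [mul_comm] using this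

def monicDiffOp (hd : IsDerivation d) {n : ℕ} (a : Fin n → F) :
    Module.End (constants F d hd) F :=
  ∑ i, LinearMap.mulLeft (constants F d hd) (a i) ∘ₗ hd.toLinearMap ^ (i : ℕ) +
    hd.toLinearMap ^ n

theorem monicDiffOp_apply (hd : IsDerivation d) {n : ℕ} (a : Fin n → F) (y : F) :
    monicDiffOp hd a y = ∑ i, a i * d^[i] y + d^[n] y := by
  simp only [monicDiffOp, LinearMap.add_apply, LinearMap.sum_apply, LinearMap.comp_apply,
    LinearMap.mulLeft_apply, Module.End.pow_apply, IsDerivation.coe_toLinearMap]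

theorem exists_monicDiffOp_ne_zero (hd : IsDerivation d) {n : ℕ} (a : Fin n → F)
    {z : Fin (n + 1) → F} (hz : LinearIndependent (constants F d hd) z) :
    ∃ j, monicDiffOp hd a (z j) ≠ 0 := by
  by_contra! h
  have hinj := Matrix.vecMul_injective_iff_isUnit.mpr (isUnit_wronskianMatrix hd hz)
  have hsnoc : (Fin.snoc a 1 : Fin (n + 1) → F) ᵥ* wronskianMatrix d z =
      0 ᵥ* wronskianMatrix d z := by
    funext j
    simpa [vecMul_wronskianMatrix_apply, Fin.sum_univ_castSucc, monicDiffOp_apply] using h j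
  simpa using congrFun (hinj hsnoc) (Fin.last n)

theorem ker_monicDiffOp_eq_iff (hd : IsDerivation d) {n : ℕ} (a : Fin n → F)
    {V : Submodule (constants F d hd) F} {y : Fin n → F}
    (hy : LinearIndependent (constants F d hd) y) (hV : Submodule.span _ (Set.range y) = V) :
    LinearMap.ker (monicDiffOp hd a) = V ↔ ∀ j, monicDiffOp hd a (y j) = 0 := by
  refine ⟨fun h j => ?_, fun h => ?_⟩
  · rw [← LinearMap.mem_ker, h, ← hV]
    exact Submodule.subset_span (Set.mem_range_self j)
  have hVker : V ≤ LinearMap.ker (monicDiffOp hd a) :=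
    hV ▸ Submodule.span_le.mpr (Set.range_subset_iff.mpr h)
  refine le_antisymm (fun z hz => ?_) hVker
  by_contra hzV
  have hsnoc := linearIndependent_finSnoc.mpr ⟨hy, hV ▸ hzV⟩
  obtain ⟨j, hj⟩ := exists_monicDiffOp_ne_zero hd a hsnoc
  refine hj (Fin.lastCases ?_ (fun j => ?_) j)
  · simpa using hz
  · simpa using h j

end

theorem existsUnique_monic_diffOp_with_zeros_general {F : Type*} [Field F]
    (d : F → F) (hd : IsDerivation d)
    (n : ℕ) (V : Submodule (constants F d hd) F)
    [FiniteDimensional (constants F d hd) V]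
    (hdim : Module.finrank (constants F d hd) V = n) :
    ∃! a : Fin n → F,
      {y : F | (∑ i : Fin n, a i * d^[(i : ℕ)] y) + d^[n] y = 0} = (V : Set F) := by
  set b := Module.finBasisOfFinrankEq (constants F d hd) V hdim
  set y : Fin n → F := fun j => (b j : F)
  have hy : LinearIndependent (constants F d hd) y :=
    b.linearIndependent.map' V.subtype (Submodule.ker_subtype V)
  have hzeros : ∀ a : Fin n → F,
      {z : F | (∑ i, a i * d^[(i : ℕ)] z) + d^[n] z = 0} = (V : Set F) ↔
        Matrix.vecMul a (wronskianMatrix d y) = -fun j => d^[n] (y j) := by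
    intro a
    have hker : {z : F | (∑ i, a i * d^[(i : ℕ)] z) + d^[n] z = 0} =
        (LinearMap.ker (monicDiffOp hd a) : Set F) := by
      ext z; simp [monicDiffOp_apply]
    rw [hker, SetLike.coe_set_eq, ker_monicDiffOp_eq_iff hd a hy
      (Submodule.span_range_subtype_basis b), funext_iff]
    simp only [monicDiffOp_apply, vecMul_wronskianMatrix_apply, Pi.neg_apply,
      eq_neg_iff_add_eq_zero]
  simp only [hzeros]
  have hunit := isUnit_wronskianMatrix hd hy
  exact Function.Bijective.existsUnique ⟨Matrix.vecMul_injective_iff_isUnit.mpr hunit,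
    Matrix.vecMul_surjective_iff_isUnit.mpr hunit⟩ _

/-- Given any `C`-vector subspace `V ⊆ F` of finite dimension `n`, there is a
unique monic differential operator `P_V = a₀ + a₁∂ + ⋯ + a_{n-1}∂^{n-1} + ∂^n` of degree `n`
such that `Zer(P_V) = V`. -/
theorem existsUnique_monic_diffOp_with_zeros {F : Type*} [Field F] [CharZero F]
    (d : F → F) (hd : IsDerivation d)
    (halg : IsAlgClosed (constants F d hd))
    (hne : constants F d hd ≠ ⊤)
    (n : ℕ) (V : Submodule (constants F d hd) F)
    [FiniteDimensional (constants F d hd) V]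
    (hdim : Module.finrank (constants F d hd) V = n) :
    ∃! a : Fin n → F,
      {y : F | (∑ i : Fin n, a i * d^[(i : ℕ)] y) + d^[n] y = 0} = (V : Set F) :=
  existsUnique_monic_diffOp_with_zeros_general d hd n V hdim
end

section
/- If F is linearly differentially closed, then every differential operator P ∈ F⟨∂⟩ of degree n ≥ 1 with leading coefficient a_n can be written as a product of degree-one factors: P = a_n(∂ + x_1)⋯(∂ + x_n) for some x_1, …, x_n ∈ F. -/
open Finset

/-!
If `y ≠ 0` is a zero of `P`, then `∂ - y'/y` is a right factor of `P`. Indeed, dividing `∂^i` on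
the right by `∂ + c` leaves the remainder `rᵢ ∈ F` with `r₀ = 1`, `rᵢ₊₁ = rᵢ' - rᵢ c`; for
`c = -y'/y` this is `rᵢ = y⁽ⁱ⁾/y`, so the remainder of `P = Σ aᵢ ∂^i` is `P(y)/y = 0`. The
quotient has degree `n - 1` and the same leading coefficient, and induction on `n` finishes.
-/

section RightDivision

variable {F : Type*} [Field F] (d : F → F) (c : F)

/-- The remainder of `∂^i` on right division by `∂ + c`. -/
def powDivRem : ℕ → F
  | 0 => 1
  | i + 1 => d (powDivRem i) - powDivRem i * c

/-- The coefficient of `∂^j` in the quotient of `∂^i` on right division by `∂ + c`. -/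
def powDivQuo : ℕ → ℕ → F
  | 0, _ => 0
  | i + 1, 0 => d (powDivQuo i 0) + powDivRem d c i
  | i + 1, j + 1 => powDivQuo i j + d (powDivQuo i (j + 1))

variable {d}

theorem powDivQuo_eq_zero_of_le (hd : IsDerivation d) {i j : ℕ} (hij : i ≤ j) :
    powDivQuo d c i j = 0 := by
  induction i generalizing j with
  | zero => rfl
  | succ i ih =>
    obtain ⟨j, rfl⟩ : ∃ j', j = j' + 1 := ⟨j - 1, by omega⟩
    rw [powDivQuo, ih (by omega), ih (by omega), hd.map_zero', add_zero]

theorem powDivQuo_succ_self (hd : IsDerivation d) (i : ℕ) : powDivQuo d c (i + 1) i = 1 := by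
  induction i with
  | zero => rw [powDivQuo, powDivQuo, powDivRem, hd.map_zero', zero_add]
  | succ i ih =>
    rw [powDivQuo, ih, powDivQuo_eq_zero_of_le c hd le_rfl, hd.map_zero', add_zero]

theorem sum_mul_powDivQuo_eq (hd : IsDerivation d) (n : ℕ) (a : ℕ → F) :
    ∑ i ∈ range (n + 2), a i * powDivQuo d c i n = a (n + 1) := by
  rw [sum_eq_single_of_mem (n + 1) (self_mem_range_succ _), powDivQuo_succ_self c hd, mul_one]
  intro i hi hne
  rw [powDivQuo_eq_zero_of_le c hd (by simp only [mem_range] at hi; omega), mul_zero]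

theorem mul_powDivRem_neg_logDeriv (hd : IsDerivation d) {y : F} (hy : y ≠ 0) (i : ℕ) :
    y * powDivRem d (-(d y / y)) i = d^[i] y := by
  induction i with
  | zero => rw [powDivRem, mul_one, Function.iterate_zero_apply]
  | succ i ih =>
    rw [powDivRem, Function.iterate_succ_apply', ← ih, hd.leibniz]
    field_simp
    ring

variable {A : Type*} [Ring A] (ι : F →+* A) {δ : A}

theorem pow_eq_powDivQuo_mul_add (hd : IsDerivation d)
    (hcomm : ∀ a : F, δ * ι a = ι a * δ + ι (d a)) (i : ℕ) :
    δ ^ i = (∑ j ∈ range i, ι (powDivQuo d c i j) * δ ^ j) * (δ + ι c)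
      + ι (powDivRem d c i) := by
  induction i with
  | zero => simp [powDivRem]
  | succ i ih =>
    set Q := ∑ j ∈ range i, ι (powDivQuo d c i j) * δ ^ j
    have hδQ : δ * Q = ∑ j ∈ range i, ι (powDivQuo d c i j) * δ ^ (j + 1)
        + ∑ j ∈ range (i + 1), ι (d (powDivQuo d c i j)) * δ ^ j := by
      rw [sum_range_succ, powDivQuo_eq_zero_of_le c hd le_rfl, hd.map_zero', map_zero,
        zero_mul, add_zero, mul_sum, ← sum_add_distrib]
      refine sum_congr rfl fun j _ => ?_
      rw [← mul_assoc, hcomm, add_mul, mul_assoc, ← pow_succ']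
    have hquo : ∑ j ∈ range (i + 1), ι (powDivQuo d c (i + 1) j) * δ ^ j
        = δ * Q + ι (powDivRem d c i) := by
      rw [hδQ, sum_range_succ' _ i, sum_range_succ' _ i]
      simp only [powDivQuo, map_add, add_mul, sum_add_distrib, pow_zero, mul_one]
      abel
    calc δ ^ (i + 1)
        = δ * (Q * (δ + ι c)) + (ι (powDivRem d c i) * δ + ι (d (powDivRem d c i))) := by
          rw [pow_succ', ih, mul_add, hcomm]
      _ = (δ * Q + ι (powDivRem d c i)) * (δ + ι c)
          + ι (d (powDivRem d c i) - powDivRem d c i * c) := by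
          rw [map_sub, map_mul]
          noncomm_ring
      _ = _ := by rw [← hquo, powDivRem]

theorem sum_eq_mul_add (hd : IsDerivation d) (hcomm : ∀ a : F, δ * ι a = ι a * δ + ι (d a))
    (n : ℕ) (a : ℕ → F) :
    ∑ i ∈ range (n + 2), ι (a i) * δ ^ i
      = (∑ j ∈ range (n + 1),
          ι (∑ i ∈ range (n + 2), a i * powDivQuo d c i j) * δ ^ j) * (δ + ι c)
        + ι (∑ i ∈ range (n + 2), a i * powDivRem d c i) := by
  have hterm : ∀ i ∈ range (n + 2), ι (a i) * δ ^ i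
      = (∑ j ∈ range (n + 1), ι (a i * powDivQuo d c i j) * δ ^ j) * (δ + ι c)
        + ι (a i * powDivRem d c i) := by
    intro i hi
    have hi : i ≤ n + 1 := by simp only [mem_range] at hi; omega
    rw [pow_eq_powDivQuo_mul_add c ι hd hcomm i, mul_add, ← map_mul, ← mul_assoc, mul_sum,
      ← sum_subset (range_subset_range.2 hi)]
    · simp only [← mul_assoc, ← map_mul]
    · intro j _ hj
      rw [powDivQuo_eq_zero_of_le c hd (by simpa using hj), mul_zero, map_zero, zero_mul]
  rw [sum_congr rfl hterm, sum_add_distrib, ← sum_mul, sum_comm, ← map_sum]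
  simp only [← sum_mul, ← map_sum]

theorem exists_eq_mul_neg_logDeriv (hd : IsDerivation d)
    (hcomm : ∀ a : F, δ * ι a = ι a * δ + ι (d a)) {n : ℕ} {a : ℕ → F} {y : F} (hy : y ≠ 0)
    (hPy : diffOpAct d (n + 1) a y = 0) :
    ∃ b : ℕ → F, b n = a (n + 1) ∧
      ∑ i ∈ range (n + 2), ι (a i) * δ ^ i
        = (∑ j ∈ range (n + 1), ι (b j) * δ ^ j) * (δ + ι (-(d y / y))) := by
  have hrem : ∑ i ∈ range (n + 2), a i * powDivRem d (-(d y / y)) i = 0 := by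
    apply (mul_right_inj' hy).mp
    simp only [mul_sum, mul_left_comm y, mul_powDivRem_neg_logDeriv hd hy, mul_zero]
    exact hPy
  refine ⟨fun j => ∑ i ∈ range (n + 2), a i * powDivQuo d (-(d y / y)) i j,
    sum_mul_powDivQuo_eq _ hd n a, ?_⟩
  rw [sum_eq_mul_add _ ι hd hcomm, hrem, map_zero, add_zero]

end RightDivision

theorem diffOp_eq_prod_linear_factors_general {F : Type*} [Field F]
    (d : F → F) (hd : IsDerivation d)
    (hldc : LinDiffClosed d)
    {A : Type*} [Ring A] (ι : F →+* A) (δ : A) (hA : IsDiffOpRing d A ι δ)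
    (n : ℕ) (a : ℕ → F) (han : a n ≠ 0) :
    ∃ x : Fin n → F,
      ∑ i ∈ Finset.range (n + 1), ι (a i) * δ ^ i
        = ι (a n) * (List.ofFn fun i : Fin n => δ + ι (x i)).prod := by
  induction n generalizing a with
  | zero => exact ⟨Fin.elim0, by simp⟩
  | succ n ih =>
    obtain ⟨y, hy, hPy⟩ := hldc (n + 1) a n.succ_pos han
    obtain ⟨b, hb, hfac⟩ := exists_eq_mul_neg_logDeriv ι hd hA.comm hy hPy
    obtain ⟨z, hz⟩ := ih b (hb ▸ han)
    refine ⟨Fin.snoc z (-(d y / y)), ?_⟩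
    rw [hfac, hz, hb, mul_assoc, List.ofFn_succ', List.prod_concat]
    simp only [Fin.snoc_castSucc, Fin.snoc_last]

/-- If `F` is linearly differentially closed, then every differential operator
`P = Σ_{i ≤ n} aᵢ ∂^i` of degree `n ≥ 1` (leading coefficient `aₙ ≠ 0`) can be written as a
product of degree-one factors: `P = aₙ (∂ + x₁) ⋯ (∂ + xₙ)`. -/
theorem diffOp_eq_prod_linear_factors {F : Type*} [Field F] [CharZero F]
    (d : F → F) (hd : IsDerivation d)
    (halg : IsAlgClosed (constants F d hd))
    (hne : constants F d hd ≠ ⊤)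
    (hldc : LinDiffClosed d)
    {A : Type*} [Ring A] (ι : F →+* A) (δ : A) (hA : IsDiffOpRing d A ι δ)
    (n : ℕ) (hn : 1 ≤ n) (a : ℕ → F) (han : a n ≠ 0) :
    ∃ x : Fin n → F,
      ∑ i ∈ Finset.range (n + 1), ι (a i) * δ ^ i
        = ι (a n) * (List.ofFn fun i : Fin n => δ + ι (x i)).prod :=
  diffOp_eq_prod_linear_factors_general d hd hldc ι δ hA n a han
end

section
/- Let V and W be two finite-dimensional C-vector subspaces of F. Then there exists a nonzero a ∈ F such that aV ∩ W = {0}. -/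
/-! Pick `t ∈ F` that is not a constant; as `C` is algebraically closed, `t` is transcendental
over `C`, and `a = tⁿ` works for large `n`. Indeed the `C[t]`-module `N` spanned by `V + W` is
finitely generated and torsion-free over the Noetherian domain `C[t] ≅ C[X]`, so Krull's
intersection theorem gives `⋂ₙ tⁿN = 0`. The decreasing chain `W ∩ tⁿN` of subspaces of the
finite-dimensional `W` therefore reaches `0`, and `tⁿV ⊆ tⁿN`. -/

open Finset

theorem IsAlgClosed.transcendental_of_notMem_range {K L : Type*} [Field K] [IsAlgClosed K]
    [Field L] [Algebra K L] {t : L} (ht : t ∉ Set.range (algebraMap K L)) : Transcendental K t :=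
  fun h ↦ by
    have := IntermediateField.isAlgebraic_adjoin_simple h.isIntegral
    exact ht <| IntermediateField.mem_bot.mp <| IntermediateField.adjoin_simple_eq_bot_iff.mp
      (IntermediateField.eq_bot_of_isAlgClosed_of_isAlgebraic _)

theorem Submodule.exists_inf_eq_bot_of_antitone {R M : Type*} [Ring R] [AddCommGroup M]
    [Module R M] (W : Submodule R M) [IsArtinian R W] {f : ℕ → Submodule R M} (hf : Antitone f)
    (h : ⨅ n, f n = ⊥) : ∃ n, W ⊓ f n = ⊥ := by
  obtain ⟨n, hn⟩ := IsArtinian.monotone_stabilizes (M := W)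
    ⟨fun n ↦ OrderDual.toDual ((f n).comap W.subtype), fun _ _ hab ↦ comap_mono (hf hab)⟩
  refine ⟨n, eq_bot_iff.mpr fun x ⟨hxW, hxf⟩ ↦ ?_⟩
  have hx : x ∈ ⨅ m, f m := mem_iInf _ |>.mpr fun m ↦ by
    have hnm : (f n).comap W.subtype = (f (max n m)).comap W.subtype := hn _ (le_max_left n m)
    have : (⟨x, hxW⟩ : W) ∈ (f (max n m)).comap W.subtype := hnm ▸ hxf
    exact hf (le_max_right n m) this
  rwa [h] at hx

theorem Ideal.iInf_pow_smul_eq_bot_of_fg {R M : Type*} [CommRing R] [IsDomain R]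
    [IsNoetherianRing R] [AddCommGroup M] [Module R M] [Module.IsTorsionFree R M] {I : Ideal R}
    (hI : I ≠ ⊤) {N : Submodule R M} (hN : N.FG) : ⨅ n : ℕ, I ^ n • N = ⊥ := by
  have : Module.Finite R N := Module.Finite.iff_fg.mpr hN
  have := congrArg (Submodule.map N.subtype) (I.iInf_pow_smul_eq_bot_of_isTorsionFree (M := N) hI)
  simpa [Submodule.map_iInf _ N.injective_subtype, Submodule.map_smul''] using this

theorem Transcendental.exists_pow_mul_inf_eq_bot {K L : Type*} [Field K] [CommRing L] [IsDomain L]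
    [Algebra K L] {t : L} (ht : Transcendental K t) (V W : Submodule K L)
    [FiniteDimensional K V] [FiniteDimensional K W] :
    ∃ n : ℕ, V.map (LinearMap.mulLeft K (t ^ n)) ⊓ W = ⊥ := by
  let e := Polynomial.algEquivOfTranscendental K t ht
  have := isNoetherianRing_of_ringEquiv _ e.toRingEquiv
  let tR : Algebra.adjoin K {t} := ⟨t, Algebra.self_mem_adjoin_singleton K t⟩
  let I := Ideal.span {tR}
  have hI : I ≠ ⊤ := by
    rw [Ne, Ideal.span_singleton_eq_top]
    exact fun h ↦ Polynomial.not_isUnit_X (by simpa [e, tR] using h.map e.symm)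
  let N := Submodule.span (Algebra.adjoin K {t}) ((V ⊔ W : Submodule K L) : Set L)
  have hN : N.FG := by
    obtain ⟨s, hs⟩ := (Submodule.fg_iff_finiteDimensional (V ⊔ W)).mpr inferInstance
    exact ⟨s, by rw [← Submodule.span_span_of_tower K, hs]⟩
  obtain ⟨n, hn⟩ := W.exists_inf_eq_bot_of_antitone (f := fun n ↦ (I ^ n • N).restrictScalars K)
    (fun _ _ h ↦ Submodule.restrictScalars_mono _ <|
      Submodule.smul_mono_left (Ideal.pow_le_pow_right h))
    (by rw [← Submodule.restrictScalars_iInf, I.iInf_pow_smul_eq_bot_of_fg hI hN,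
      Submodule.restrictScalars_bot])
  refine ⟨n, eq_bot_iff.mpr ?_⟩
  rw [← hn, inf_comm]
  refine inf_le_inf_left _ ?_
  rintro _ ⟨v, hv, rfl⟩
  exact (Submodule.smul_mem_smul (Ideal.pow_mem_pow (Ideal.mem_span_singleton_self tR) n)
    (Submodule.subset_span (Submodule.mem_sup_left hv)) : tR ^ n • v ∈ I ^ n • N)

theorem exists_mul_inter_eq_bot_general {F : Type*} [Field F]
    (d : F → F) (hd : IsDerivation d)
    (halg : IsAlgClosed (constants F d hd))
    (hne : constants F d hd ≠ ⊤)
    (V W : Submodule (constants F d hd) F)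
    [FiniteDimensional (constants F d hd) V]
    [FiniteDimensional (constants F d hd) W] :
    ∃ a : F, a ≠ 0 ∧
      Submodule.map (LinearMap.mulLeft (constants F d hd) a) V ⊓ W = ⊥ := by
  obtain ⟨t, ht⟩ : ∃ t, t ∉ constants F d hd := by
    by_contra! h
    exact hne (eq_top_iff.mpr fun x _ ↦ h x)
  have htr : Transcendental (constants F d hd) t :=
    IsAlgClosed.transcendental_of_notMem_range (by rintro ⟨c, rfl⟩; exact ht c.2)
  obtain ⟨n, hn⟩ := htr.exists_pow_mul_inf_eq_bot V W
  exact ⟨t ^ n, pow_ne_zero n (by rintro rfl; exact ht (zero_mem _)), hn⟩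

/-- Let `V` and `W` be two finite-dimensional `C`-subspaces of `F`. Then there
is a nonzero `a ∈ F` such that `aV ∩ W = {0}`. -/
theorem exists_mul_inter_eq_bot {F : Type*} [Field F] [CharZero F]
    (d : F → F) (hd : IsDerivation d)
    (halg : IsAlgClosed (constants F d hd))
    (hne : constants F d hd ≠ ⊤)
    (V W : Submodule (constants F d hd) F)
    [FiniteDimensional (constants F d hd) V]
    [FiniteDimensional (constants F d hd) W] :
    ∃ a : F, a ≠ 0 ∧
      Submodule.map (LinearMap.mulLeft (constants F d hd) a) V ⊓ W = ⊥ :=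
  exists_mul_inter_eq_bot_general d hd halg hne V W
end

section
/- Suppose F is linearly differentially closed. Then F(∂) = F⟨∂⟩ + F⟨∂^{-1}⟩, i.e., every rational pseudo-differential operator is the sum of a differential operator and an integration operator. -/
open Finset

/-!
If `P` has order `n ≥ 1` and `y ≠ 0` is a zero of `P` (which exists since `F` is linearly
differentially closed), then `P y = R ∂` with `R` of order `< n`, so `P⁻¹ = y ∂⁻¹ R⁻¹`. By
induction on the order, `P⁻¹ Q` lies in every left `F⟨∂⁻¹⟩`-submodule of `F(∂)` containing
`F⟨∂⟩`, and `F⟨∂⟩ + F⟨∂⁻¹⟩` is one: `∂⁻¹ a ∂^(i+1) = a ∂^i - ∂⁻¹ a' ∂^i`.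
-/

namespace RatPseudoDiffOp

variable {F A : Type*} [Field F] [Ring A] {d : F → F} {ι : F →+* A} {δ : A}

variable (ι δ) in
def orderLT (n : ℕ) : AddSubgroup A where
  carrier := {P | ∃ b : ℕ → F, P = ∑ i ∈ range n, ι (b i) * δ ^ i}
  add_mem' := by
    rintro _ _ ⟨b, rfl⟩ ⟨c, rfl⟩
    exact ⟨b + c, by simp only [Pi.add_apply, map_add, add_mul, sum_add_distrib]⟩
  zero_mem' := ⟨0, by simp⟩
  neg_mem' := by
    rintro _ ⟨b, rfl⟩
    exact ⟨-b, by simp only [Pi.neg_apply, map_neg, neg_mul, sum_neg_distrib]⟩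

lemma sum_mem_orderLT (n : ℕ) (b : ℕ → F) : ∑ i ∈ range n, ι (b i) * δ ^ i ∈ orderLT ι δ n :=
  ⟨b, rfl⟩

lemma monomial_mem_orderLT (a : F) {i n : ℕ} (hi : i < n) : ι a * δ ^ i ∈ orderLT ι δ n :=
  ⟨fun k => if k = i then a else 0, by
    rw [sum_eq_single_of_mem i (mem_range.2 hi) fun k _ hk => by simp [hk]]
    simp⟩

lemma ι_mem_orderLT_succ (a : F) (n : ℕ) : ι a ∈ orderLT ι δ (n + 1) := by
  simpa using monomial_mem_orderLT (δ := δ) a n.succ_pos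

lemma orderLT_mono {m n : ℕ} (h : m ≤ n) : orderLT ι δ m ≤ orderLT ι δ n := by
  rintro _ ⟨b, rfl⟩
  exact sum_mem fun i hi => monomial_mem_orderLT _ ((mem_range.1 hi).trans_le h)

lemma ι_mul_mem_orderLT (a : F) {n : ℕ} {P : A} (hP : P ∈ orderLT ι δ n) :
    ι a * P ∈ orderLT ι δ n := by
  obtain ⟨b, rfl⟩ := hP
  rw [mul_sum]
  exact sum_mem fun i hi => by
    rw [← mul_assoc, ← map_mul]
    exact monomial_mem_orderLT _ (mem_range.1 hi)

lemma δ_mul_mem_orderLT (hcomm : ∀ a, δ * ι a = ι a * δ + ι (d a)) {n : ℕ} {P : A}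
    (hP : P ∈ orderLT ι δ n) : δ * P ∈ orderLT ι δ (n + 1) := by
  obtain ⟨b, rfl⟩ := hP
  rw [mul_sum]
  refine sum_mem fun i hi => ?_
  have hi : i < n := mem_range.1 hi
  rw [← mul_assoc, hcomm, add_mul, mul_assoc, ← pow_succ']
  exact add_mem (monomial_mem_orderLT _ (by omega)) (monomial_mem_orderLT _ (by omega))

lemma pow_mul_ι_eq (hcomm : ∀ a, δ * ι a = ι a * δ + ι (d a)) (c : F) (i : ℕ) :
    ∃ R ∈ orderLT ι δ i, δ ^ i * ι c = ι (d^[i] c) + R * δ := by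
  induction i with
  | zero => exact ⟨0, zero_mem _, by simp⟩
  | succ i ih =>
    obtain ⟨R, hR, h⟩ := ih
    refine ⟨ι (d^[i] c) + δ * R, add_mem (ι_mem_orderLT_succ _ i) (δ_mul_mem_orderLT hcomm hR), ?_⟩
    rw [pow_succ', mul_assoc, h, mul_add, hcomm, Function.iterate_succ_apply', add_mul,
      mul_assoc]
    abel

lemma sum_mul_ι_eq (hcomm : ∀ a, δ * ι a = ι a * δ + ι (d a)) (n : ℕ) (a : ℕ → F) (c : F) :
    ∃ R ∈ orderLT ι δ n,
      (∑ i ∈ range (n + 1), ι (a i) * δ ^ i) * ι c = ι (diffOpAct d n a c) + R * δ := by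
  choose R hR h using pow_mul_ι_eq hcomm c
  refine ⟨∑ i ∈ range (n + 1), ι (a i) * R i, sum_mem fun i hi => ι_mul_mem_orderLT _
    (orderLT_mono (Nat.lt_succ_iff.1 (mem_range.1 hi)) (hR i)), ?_⟩
  simp only [diffOpAct, sum_mul, map_sum, map_mul, mul_assoc, h, mul_add, sum_add_distrib]

lemma exists_mul_ι_eq_mul_δ (hldc : LinDiffClosed d) (hcomm : ∀ a, δ * ι a = ι a * δ + ι (d a))
    {n : ℕ} (hn : 0 < n) {a : ℕ → F} (ha : a n ≠ 0) :
    ∃ y ≠ 0, ∃ R ∈ orderLT ι δ n, (∑ i ∈ range (n + 1), ι (a i) * δ ^ i) * ι y = R * δ := by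
  obtain ⟨y, hy, hya⟩ := hldc n a hn ha
  obtain ⟨R, hR, h⟩ := sum_mul_ι_eq hcomm n a y
  exact ⟨y, hy, R, hR, by rw [h, hya, map_zero, zero_add]⟩

lemma _root_.IsDiffOpRing.exists_mem_orderLT (hA : IsDiffOpRing d A ι δ) (P : A) :
    ∃ n, P ∈ orderLT ι δ n := by
  obtain ⟨c, rfl, -⟩ := hA.repr P
  obtain ⟨n, hn⟩ := c.support.exists_nat_subset_range
  exact ⟨n, c, Finsupp.sum_of_support_subset _ hn _ fun i _ => by rw [map_zero, zero_mul]⟩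

lemma _root_.IsDiffOpRing.δ_ne_zero (hA : IsDiffOpRing d A ι δ) : δ ≠ 0 := by
  intro h
  obtain ⟨c, -, huniq⟩ := hA.repr δ
  have h1 : Finsupp.single 1 1 = c := huniq _ (by simp)
  have h0 : 0 = c := huniq _ (by simpa only [Finsupp.sum_zero_index])
  exact Finsupp.single_ne_zero.2 one_ne_zero (h1.trans h0.symm)

section QuotientRing

variable {K : Type*} [DivisionRing K] (j : A →+* K)

variable (ι δ) in
def integrationOps : Subring K := Subring.closure (Set.range (j.comp ι) ∪ {(j δ)⁻¹})

variable (ι δ) in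
def diffAddIntegrationOps : AddSubgroup K :=
  j.range.toAddSubgroup ⊔ (integrationOps ι δ j).toAddSubgroup

lemma map_ι_mem_integrationOps (a : F) : j (ι a) ∈ integrationOps ι δ j :=
  Subring.subset_closure (Or.inl ⟨a, rfl⟩)

lemma inv_map_δ_mem_integrationOps : (j δ)⁻¹ ∈ integrationOps ι δ j :=
  Subring.subset_closure (Or.inr rfl)

lemma inv_map_ι (a : F) : (j (ι a))⁻¹ = j (ι a⁻¹) :=
  (map_inv₀ (j.comp ι) a).symm

lemma map_mem_diffAddIntegrationOps (P : A) : j P ∈ diffAddIntegrationOps ι δ j :=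
  AddSubgroup.mem_sup_left ⟨P, rfl⟩

lemma mem_diffAddIntegrationOps_of_mem {I : K} (hI : I ∈ integrationOps ι δ j) :
    I ∈ diffAddIntegrationOps ι δ j :=
  AddSubgroup.mem_sup_right hI

lemma inv_δ_mul_mem_diffAddIntegrationOps (hA : IsDiffOpRing d A ι δ) (hδ : j δ ≠ 0) (P : A) :
    (j δ)⁻¹ * j P ∈ diffAddIntegrationOps ι δ j := by
  have monomial : ∀ i (a : F), (j δ)⁻¹ * j (ι a * δ ^ i) ∈ diffAddIntegrationOps ι δ j := by
    intro i
    induction i with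
    | zero =>
      intro a
      rw [pow_zero, mul_one]
      exact mem_diffAddIntegrationOps_of_mem j
        (mul_mem (inv_map_δ_mem_integrationOps j) (map_ι_mem_integrationOps j a))
    | succ i ih =>
      intro a
      have h : ι a * δ ^ (i + 1) = δ * (ι a * δ ^ i) - ι (d a) * δ ^ i := by
        rw [← mul_assoc, hA.comm, add_mul, add_sub_cancel_right, mul_assoc, ← pow_succ']
      rw [h, map_sub, map_mul, mul_sub, inv_mul_cancel_left₀ hδ]
      exact sub_mem (map_mem_diffAddIntegrationOps j _) (ih _)
  obtain ⟨n, b, rfl⟩ := hA.exists_mem_orderLT P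
  rw [map_sum, mul_sum]
  exact sum_mem fun i _ => monomial i (b i)

lemma mul_mem_diffAddIntegrationOps (hA : IsDiffOpRing d A ι δ) (hδ : j δ ≠ 0) {I f : K}
    (hI : I ∈ integrationOps ι δ j) (hf : f ∈ diffAddIntegrationOps ι δ j) :
    I * f ∈ diffAddIntegrationOps ι δ j := by
  induction hI using Subring.closure_induction generalizing f with
  | mem x hx =>
    obtain ⟨_, ⟨Q, rfl⟩, J, hJ, rfl⟩ := AddSubgroup.mem_sup.1 hf
    rw [mul_add]
    refine add_mem ?_ (mem_diffAddIntegrationOps_of_mem j (mul_mem (Subring.subset_closure hx) hJ))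
    rcases hx with ⟨a, rfl⟩ | rfl
    · rw [RingHom.comp_apply, ← map_mul]
      exact map_mem_diffAddIntegrationOps j _
    · exact inv_δ_mul_mem_diffAddIntegrationOps j hA hδ Q
  | zero => simp
  | one => simpa using hf
  | add x y _ _ hx hy => rw [add_mul]; exact add_mem (hx hf) (hy hf)
  | neg x _ hx => rw [neg_mul]; exact neg_mem (hx hf)
  | mul x y _ _ hx hy => rw [mul_assoc]; exact hx (hy hf)

lemma inv_mul_mem_diffAddIntegrationOps (hldc : LinDiffClosed d) (hA : IsDiffOpRing d A ι δ)
    (hδ : j δ ≠ 0) (n : ℕ) {P : A} (hP : P ∈ orderLT ι δ n) (Q : A) :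
    (j P)⁻¹ * j Q ∈ diffAddIntegrationOps ι δ j := by
  induction n generalizing P Q with
  | zero =>
    obtain ⟨b, rfl⟩ := hP
    simp
  | succ n ih =>
    obtain ⟨a, rfl⟩ := hP
    rcases Nat.eq_zero_or_pos n with rfl | hn
    · rw [sum_range_one, pow_zero, mul_one, inv_map_ι, ← map_mul]
      exact map_mem_diffAddIntegrationOps j _
    by_cases ha : a n = 0
    · rw [sum_range_succ, ha, map_zero, zero_mul, add_zero]
      exact ih (sum_mem_orderLT n a) Q
    obtain ⟨y, hy, R, hR, hPR⟩ := exists_mul_ι_eq_mul_δ hldc hA.comm hn ha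
    have hP : ∑ i ∈ range (n + 1), ι (a i) * δ ^ i = R * δ * ι y⁻¹ := by
      rw [← hPR, mul_assoc, ← map_mul, mul_inv_cancel₀ hy, map_one, mul_one]
    rw [hP, map_mul, map_mul, mul_inv_rev, mul_inv_rev, inv_map_ι, inv_inv, mul_assoc, mul_assoc]
    exact mul_mem_diffAddIntegrationOps j hA hδ (map_ι_mem_integrationOps j y)
      (mul_mem_diffAddIntegrationOps j hA hδ (inv_map_δ_mem_integrationOps j) (ih hR Q))

end QuotientRing

end RatPseudoDiffOp

theorem ratPseudoDiffOp_decomposition_general {F : Type*} [Field F]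
    (d : F → F)
    (hldc : LinDiffClosed d)
    {A : Type*} [Ring A] (ι : F →+* A) (δ : A) (hA : IsDiffOpRing d A ι δ)
    {K : Type*} [DivisionRing K] (j : A →+* K) (hK : IsQuotientDivisionRing A K j) :
    ∀ f : K, ∃ P : A,
      ∃ I ∈ Subring.closure (Set.range (j.comp ι) ∪ {(j δ)⁻¹}), f = j P + I := by
  intro f
  obtain ⟨P, Q, -, rfl⟩ := hK.quot f
  obtain ⟨n, hP⟩ := hA.exists_mem_orderLT P
  have hδ : j δ ≠ 0 := (map_ne_zero_iff j hK.inj).2 hA.δ_ne_zero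
  obtain ⟨_, ⟨S, rfl⟩, I, hI, hSI⟩ :=
    AddSubgroup.mem_sup.1 (RatPseudoDiffOp.inv_mul_mem_diffAddIntegrationOps j hldc hA hδ n hP Q)
  exact ⟨S, I, hI, hSI.symm⟩

/-- If `F` is linearly differentially closed, then
`F(∂) = F⟨∂⟩ + F⟨∂⁻¹⟩`: every rational pseudo-differential operator is the sum of a
differential operator and an integration operator (an element of the subring of `F(∂)`
generated by `F` and `∂⁻¹`). -/
theorem ratPseudoDiffOp_decomposition {F : Type*} [Field F] [CharZero F]
    (d : F → F) (hd : IsDerivation d)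
    (halg : IsAlgClosed (constants F d hd))
    (hne : constants F d hd ≠ ⊤)
    (hldc : LinDiffClosed d)
    {A : Type*} [Ring A] (ι : F →+* A) (δ : A) (hA : IsDiffOpRing d A ι δ)
    {K : Type*} [DivisionRing K] (j : A →+* K) (hK : IsQuotientDivisionRing A K j) :
    ∀ f : K, ∃ P : A,
      ∃ I ∈ Subring.closure (Set.range (j.comp ι) ∪ {(j δ)⁻¹}), f = j P + I :=
  ratPseudoDiffOp_decomposition_general d hldc ι δ hA j hK
end

section
/- The only valuation subring of F(∂) containing F that is different from F(∂) itself is F(∂)_{≤0}, the set of rational pseudo-differential operators of nonpositive order. Equivalently, if R is a valuation subring of F(∂) with F ⊂ R and R ≠ F(∂), then R = F(∂)_{≤0}. -/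
open Finset

/-! Let `b ∈ F` be nonconstant. For `P` of degree `n ≥ 1` the commutator `[P, b] = P b - b P` has
degree exactly `n - 1` (characteristic zero), and `P⁻¹ [P, b] = b - P⁻¹ b P` lies in every subring
`R ⊇ F` stable under conjugation. Peeling off leading terms and descending along such commutators
puts every `P⁻¹ Q` with `deg Q ≤ deg P` into `R`. Conversely, if some `P⁻¹ Q ∈ R` had
`deg Q > deg P`, then `∂ = (P⁻¹ Q)(Q⁻¹ P ∂)` would lie in `R`, and then so would all of `F(∂)`. -/

section DegreeFiltration

variable {F : Type*} [Field F] {A : Type*} [Ring A] (ι : F →+* A) (δ : A)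

def degLT (k : ℕ) : AddSubgroup A where
  carrier := {T | ∃ a : ℕ → F, T = ∑ i ∈ range k, ι (a i) * δ ^ i}
  zero_mem' := ⟨0, by simp⟩
  add_mem' := by
    rintro _ _ ⟨a, rfl⟩ ⟨b, rfl⟩
    exact ⟨a + b, by simp only [Pi.add_apply, map_add, add_mul, sum_add_distrib]⟩
  neg_mem' := by
    rintro _ ⟨a, rfl⟩
    exact ⟨-a, by simp only [Pi.neg_apply, map_neg, neg_mul, sum_neg_distrib]⟩

variable {ι δ}

theorem iota_mul_mem_degLT (c : F) {T : A} {k : ℕ} (hT : T ∈ degLT ι δ k) :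
    ι c * T ∈ degLT ι δ k := by
  obtain ⟨a, rfl⟩ := hT
  exact ⟨fun i => c * a i, by simp only [mul_sum, map_mul, mul_assoc]⟩

theorem iota_mul_pow_mem_degLT (c : F) {i k : ℕ} (h : i < k) : ι c * δ ^ i ∈ degLT ι δ k := by
  refine ⟨fun l => if l = i then c else 0, ?_⟩
  rw [sum_eq_single_of_mem i (mem_range.2 h) fun l _ hl => by simp [hl]]
  simp

theorem degLT_mono {k l : ℕ} (h : k ≤ l) : degLT ι δ k ≤ degLT ι δ l := by
  rintro _ ⟨a, rfl⟩
  exact sum_mem fun i hi => iota_mul_pow_mem_degLT _ ((mem_range.1 hi).trans_le h)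

theorem eq_zero_of_mem_degLT_zero {T : A} (hT : T ∈ degLT ι δ 0) : T = 0 := by
  obtain ⟨a, rfl⟩ := hT
  exact sum_range_zero _

theorem mul_delta_mem_degLT {T : A} {k : ℕ} (hT : T ∈ degLT ι δ k) :
    T * δ ∈ degLT ι δ (k + 1) := by
  obtain ⟨a, rfl⟩ := hT
  rw [sum_mul]
  exact sum_mem fun i hi => by
    rw [mul_assoc, ← pow_succ]
    exact iota_mul_pow_mem_degLT _ (Nat.succ_lt_succ (mem_range.1 hi))

theorem HasDeg.mem_degLT {P : A} {n : ℕ} (hP : HasDeg ι δ P n) : P ∈ degLT ι δ (n + 1) := by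
  obtain ⟨a, -, rfl⟩ := hP
  exact ⟨a, rfl⟩

theorem hasDeg_iff {P : A} {n : ℕ} :
    HasDeg ι δ P n ↔ ∃ p, p ≠ 0 ∧ ∃ T ∈ degLT ι δ n, P = ι p * δ ^ n + T := by
  constructor
  · rintro ⟨a, ha, rfl⟩
    exact ⟨a n, ha, _, ⟨a, rfl⟩, by rw [sum_range_succ, add_comm]⟩
  · rintro ⟨p, hp, _, ⟨a, rfl⟩, rfl⟩
    refine ⟨Function.update a n p, by rwa [Function.update_self], ?_⟩
    rw [sum_range_succ, Function.update_self, add_comm]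
    congr 1
    exact sum_congr rfl fun i hi => by rw [Function.update_of_ne (mem_range.1 hi).ne]

theorem HasDeg.mul_delta {P : A} {n : ℕ} (hP : HasDeg ι δ P n) :
    HasDeg ι δ (P * δ) (n + 1) := by
  obtain ⟨p, hp, T, hT, rfl⟩ := hasDeg_iff.1 hP
  exact hasDeg_iff.2 ⟨p, hp, T * δ, mul_delta_mem_degLT hT, by rw [add_mul, mul_assoc, ← pow_succ]⟩

theorem exists_sub_iota_mul_mem_degLT {P T : A} {n : ℕ} (hP : HasDeg ι δ P n)
    (hT : T ∈ degLT ι δ (n + 1)) : ∃ c, T - ι c * P ∈ degLT ι δ n := by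
  obtain ⟨p, hp, P₀, hP₀, rfl⟩ := hasDeg_iff.1 hP
  obtain ⟨t, rfl⟩ := hT
  refine ⟨t n / p, ?_⟩
  have h : ∑ i ∈ range (n + 1), ι (t i) * δ ^ i - ι (t n / p) * (ι p * δ ^ n + P₀)
      = ∑ i ∈ range n, ι (t i) * δ ^ i - ι (t n / p) * P₀ := by
    rw [sum_range_succ, mul_add, ← mul_assoc, ← map_mul, div_mul_cancel₀ _ hp]
    abel
  rw [h]
  exact sub_mem ⟨t, rfl⟩ (iota_mul_mem_degLT _ hP₀)

theorem exists_hasDeg_of_mem_degLT {P : A} {k : ℕ} (hP : P ∈ degLT ι δ k) (hP0 : P ≠ 0) :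
    ∃ n, HasDeg ι δ P n := by
  induction k with
  | zero => exact absurd (eq_zero_of_mem_degLT_zero hP) hP0
  | succ k ih =>
    obtain ⟨a, rfl⟩ := hP
    by_cases hk : a k = 0
    · exact ih ⟨a, by rw [sum_range_succ, hk, map_zero, zero_mul, add_zero]⟩
    · exact ⟨k, a, hk, rfl⟩

end DegreeFiltration

namespace IsDiffOpRing

variable {F : Type*} [Field F] {d : F → F} {A : Type*} [Ring A] {ι : F →+* A} {δ : A}

theorem exists_mem_degLT (hA : IsDiffOpRing d A ι δ) (P : A) : ∃ k, P ∈ degLT ι δ k := by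
  obtain ⟨c, hc, -⟩ := hA.repr P
  refine ⟨c.support.sup id + 1, c, ?_⟩
  rw [hc]
  exact Finsupp.sum_of_support_subset _
    (fun i hi => mem_range.2 (Nat.lt_succ_of_le (le_sup (f := id) hi))) _ (by simp)

theorem coeff_eq_zero_of_sum_eq_zero (hA : IsDiffOpRing d A ι δ) {a : ℕ → F} {k : ℕ}
    (h : ∑ i ∈ range k, ι (a i) * δ ^ i = 0) {i : ℕ} (hi : i < k) : a i = 0 := by
  let c : ℕ →₀ F := ∑ l ∈ range k, Finsupp.single l (a l)
  have hc : (0 : A) = c.sum fun i x => ι x * δ ^ i := by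
    rw [← Finsupp.sum_finsetSum_index (by simp) (by simp [add_mul])]
    simpa [Finsupp.sum_single_index] using h.symm
  have hc0 : c = 0 := (hA.repr 0).unique hc (by simp)
  simpa [c, Finsupp.finsetSum_apply, Finsupp.single_apply, hi] using congrArg (· i) hc0

theorem hasDeg_ne_zero (hA : IsDiffOpRing d A ι δ) {P : A} {n : ℕ} (hP : HasDeg ι δ P n) :
    P ≠ 0 := by
  obtain ⟨a, ha, rfl⟩ := hP
  exact fun h => ha (hA.coeff_eq_zero_of_sum_eq_zero h n.lt_succ_self)

theorem exists_hasDeg (hA : IsDiffOpRing d A ι δ) {P : A} (hP : P ≠ 0) : ∃ n, HasDeg ι δ P n :=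
  exists_hasDeg_of_mem_degLT (hA.exists_mem_degLT P).choose_spec hP

theorem map_mem_subring (hA : IsDiffOpRing d A ι δ) {K : Type*} [Ring K] {j : A →+* K}
    {S : Subring K} (hF : ∀ a : F, j (ι a) ∈ S) (hδ : j δ ∈ S) (P : A) : j P ∈ S := by
  obtain ⟨k, a, rfl⟩ := hA.exists_mem_degLT P
  rw [map_sum]
  exact sum_mem fun i _ => by
    rw [map_mul, map_pow]
    exact mul_mem (hF _) (pow_mem hδ i)

theorem delta_mul_mem_degLT (hA : IsDiffOpRing d A ι δ) {T : A} {k : ℕ}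
    (hT : T ∈ degLT ι δ k) : δ * T ∈ degLT ι δ (k + 1) := by
  obtain ⟨a, rfl⟩ := hT
  rw [mul_sum]
  refine sum_mem fun i hi => ?_
  have hi : i < k := mem_range.1 hi
  rw [← mul_assoc, hA.comm, add_mul, mul_assoc, ← pow_succ']
  exact add_mem (iota_mul_pow_mem_degLT _ (by omega)) (iota_mul_pow_mem_degLT _ (by omega))

theorem pow_succ_mul_iota_sub_mem_degLT (hA : IsDiffOpRing d A ι δ) (b : F) (i : ℕ) :
    δ ^ (i + 1) * ι b - ι b * δ ^ (i + 1) - ι ((i + 1 : ℕ) * d b) * δ ^ i ∈ degLT ι δ i := by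
  induction i with
  | zero => simp [hA.comm]
  | succ i ih =>
    have h : δ ^ (i + 1 + 1) * ι b - ι b * δ ^ (i + 1 + 1) - ι ((i + 1 + 1 : ℕ) * d b) * δ ^ (i + 1)
        = δ * (δ ^ (i + 1) * ι b - ι b * δ ^ (i + 1) - ι ((i + 1 : ℕ) * d b) * δ ^ i)
          + ι (d ((i + 1 : ℕ) * d b)) * δ ^ i := by
      rw [mul_sub, mul_sub, ← mul_assoc δ (ι b), hA.comm, ← mul_assoc δ (ι _), hA.comm]
      simp only [map_mul, map_natCast, pow_succ']
      push_cast
      noncomm_ring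
    rw [h]
    exact add_mem (hA.delta_mul_mem_degLT ih) (iota_mul_pow_mem_degLT _ (by omega))

theorem pow_mul_iota_sub_mem_degLT (hA : IsDiffOpRing d A ι δ) (b : F) (i : ℕ) :
    δ ^ i * ι b - ι b * δ ^ i ∈ degLT ι δ i := by
  cases i with
  | zero => simp
  | succ i =>
    rw [← sub_add_cancel (_ - _) (ι ((i + 1 : ℕ) * d b) * δ ^ i)]
    exact add_mem (degLT_mono i.le_succ (hA.pow_succ_mul_iota_sub_mem_degLT b i))
      (iota_mul_pow_mem_degLT _ i.lt_succ_self)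

theorem mul_iota_sub_mem_degLT (hA : IsDiffOpRing d A ι δ) (b : F) {T : A} {k : ℕ}
    (hT : T ∈ degLT ι δ (k + 1)) : T * ι b - ι b * T ∈ degLT ι δ k := by
  obtain ⟨a, rfl⟩ := hT
  rw [sum_mul, mul_sum, ← sum_sub_distrib]
  refine sum_mem fun i hi => ?_
  have h : ι (a i) * δ ^ i * ι b - ι b * (ι (a i) * δ ^ i)
      = ι (a i) * (δ ^ i * ι b - ι b * δ ^ i) := by
    rw [← mul_assoc, ← map_mul, mul_comm b, map_mul, mul_sub, mul_assoc, mul_assoc]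
  rw [h]
  exact iota_mul_mem_degLT _
    (degLT_mono (Nat.lt_succ_iff.1 (mem_range.1 hi)) (hA.pow_mul_iota_sub_mem_degLT b i))

/-- The leading coefficient of `[P, b]` is `(m+1) p b'`, nonzero in characteristic zero. -/
theorem hasDeg_mul_iota_sub [CharZero F] (hA : IsDiffOpRing d A ι δ) {P : A} {m : ℕ}
    (hP : HasDeg ι δ P (m + 1)) {b : F} (hb : d b ≠ 0) :
    HasDeg ι δ (P * ι b - ι b * P) m := by
  obtain ⟨p, hp, T, hT, rfl⟩ := hasDeg_iff.1 hP
  have hcoeff : p * ((m + 1 : ℕ) * d b) ≠ 0 :=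
    mul_ne_zero hp (mul_ne_zero (Nat.cast_ne_zero.2 m.succ_ne_zero) hb)
  refine hasDeg_iff.2 ⟨_, hcoeff, _, add_mem
    (iota_mul_mem_degLT p (hA.pow_succ_mul_iota_sub_mem_degLT b m))
    (hA.mul_iota_sub_mem_degLT b hT), ?_⟩
  have hbp : ι b * ι p = ι p * ι b := by rw [← map_mul, mul_comm, map_mul]
  rw [map_mul, mul_add, ← mul_assoc (ι b), hbp]
  noncomm_ring

end IsDiffOpRing

section Conjugation

variable {K : Type*} [DivisionRing K] {R : Subring K}

theorem inv_mul_mul_mem (hinner : ∀ x : K, x ≠ 0 → ∀ r ∈ R, x * r * x⁻¹ ∈ R) {x r : K}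
    (hx : x ≠ 0) (hr : r ∈ R) : x⁻¹ * r * x ∈ R := by
  simpa using hinner x⁻¹ (inv_ne_zero hx) r hr

theorem inv_mul_commutator_mem (hinner : ∀ x : K, x ≠ 0 → ∀ r ∈ R, x * r * x⁻¹ ∈ R) {x r : K}
    (hx : x ≠ 0) (hr : r ∈ R) : x⁻¹ * (x * r - r * x) ∈ R := by
  rw [mul_sub, ← mul_assoc, ← mul_assoc, inv_mul_cancel₀ hx, one_mul]
  exact sub_mem hr (inv_mul_mul_mem hinner hx hr)

end Conjugation

section InvariantSubring

variable {F : Type*} [Field F] {d : F → F} {A : Type*} [Ring A] {ι : F →+* A} {δ : A}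
  {K : Type*} [DivisionRing K] {j : A →+* K} {R : Subring K}

/-- Division by the leading term: `T = c P + (lower)`, and `P⁻¹ c P ∈ R` by invariance. -/
theorem inv_mul_mem_of_mem_degLT_succ (hA : IsDiffOpRing d A ι δ) (hj : Function.Injective j)
    (hinner : ∀ x : K, x ≠ 0 → ∀ r ∈ R, x * r * x⁻¹ ∈ R) (hF : ∀ a : F, j (ι a) ∈ R)
    {P : A} {n : ℕ} (hP : HasDeg ι δ P n)
    (hlow : ∀ T ∈ degLT ι δ n, (j P)⁻¹ * j T ∈ R) {T : A} (hT : T ∈ degLT ι δ (n + 1)) :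
    (j P)⁻¹ * j T ∈ R := by
  have hP0 : j P ≠ 0 := (map_ne_zero_iff j hj).2 (hA.hasDeg_ne_zero hP)
  obtain ⟨c, hc⟩ := exists_sub_iota_mul_mem_degLT hP hT
  have h : (j P)⁻¹ * j T = (j P)⁻¹ * j (ι c) * j P + (j P)⁻¹ * j (T - ι c * P) := by
    rw [map_sub, map_mul, mul_sub, ← mul_assoc, add_sub_cancel]
  rw [h]
  exact add_mem (inv_mul_mul_mem hinner hP0 (hF c)) (hlow _ hc)

/-- For the lower-order part, `P⁻¹ T = (P⁻¹ C) (C⁻¹ T)` with `C = [P, b]` of degree one less,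
and `P⁻¹ C = b - P⁻¹ b P ∈ R`. -/
theorem inv_mul_mem_of_mem_degLT [CharZero F] (hA : IsDiffOpRing d A ι δ)
    (hj : Function.Injective j) (hinner : ∀ x : K, x ≠ 0 → ∀ r ∈ R, x * r * x⁻¹ ∈ R)
    (hF : ∀ a : F, j (ι a) ∈ R) {b : F} (hb : d b ≠ 0) {n : ℕ} {P T : A}
    (hP : HasDeg ι δ P n) (hT : T ∈ degLT ι δ (n + 1)) : (j P)⁻¹ * j T ∈ R := by
  induction n generalizing P T with
  | zero =>
    refine inv_mul_mem_of_mem_degLT_succ hA hj hinner hF hP (fun T hT => ?_) hT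
    rw [eq_zero_of_mem_degLT_zero hT, map_zero, mul_zero]
    exact zero_mem R
  | succ m ih =>
    refine inv_mul_mem_of_mem_degLT_succ hA hj hinner hF hP (fun T hT => ?_) hT
    have hC : HasDeg ι δ (P * ι b - ι b * P) m := hA.hasDeg_mul_iota_sub hP hb
    have hP0 : j P ≠ 0 := (map_ne_zero_iff j hj).2 (hA.hasDeg_ne_zero hP)
    have hC0 : j (P * ι b - ι b * P) ≠ 0 := (map_ne_zero_iff j hj).2 (hA.hasDeg_ne_zero hC)
    have h : (j P)⁻¹ * j T
        = (j P)⁻¹ * j (P * ι b - ι b * P) * ((j (P * ι b - ι b * P))⁻¹ * j T) := by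
      rw [mul_assoc, mul_inv_cancel_left₀ hC0]
    rw [h]
    refine mul_mem ?_ (ih hC hT)
    rw [map_sub, map_mul, map_mul]
    exact inv_mul_commutator_mem hinner hP0 (hF b)

theorem map_delta_notMem [CharZero F] (hA : IsDiffOpRing d A ι δ)
    (hK : IsQuotientDivisionRing A K j) (hinner : ∀ x : K, x ≠ 0 → ∀ r ∈ R, x * r * x⁻¹ ∈ R)
    (hF : ∀ a : F, j (ι a) ∈ R) {b : F} (hb : d b ≠ 0) (hR : R ≠ ⊤) : j δ ∉ R := by
  intro hδ
  refine hR (eq_top_iff.2 fun f _ => ?_)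
  obtain ⟨P, Q, hP, rfl⟩ := hK.quot f
  obtain ⟨n, hn⟩ := hA.exists_hasDeg hP
  have hPinv : (j P)⁻¹ ∈ R := by
    simpa using inv_mul_mem_of_mem_degLT hA hK.inj hinner hF hb hn
      (iota_mul_pow_mem_degLT 1 n.succ_pos)
  exact mul_mem hPinv (hA.map_mem_subring hF hδ Q)

end InvariantSubring

theorem exists_ne_zero_of_constants_ne_top {F : Type*} [Field F] {d : F → F}
    {hd : IsDerivation d} (hne : constants F d hd ≠ ⊤) : ∃ b, d b ≠ 0 := by
  by_contra! h
  exact hne (eq_top_iff.2 fun x _ => h x)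

theorem valuation_subring_eq_nonpositive_order_general {F : Type*} [Field F] [CharZero F]
    (d : F → F) (hd : IsDerivation d)
    (hne : constants F d hd ≠ ⊤)
    {A : Type*} [Ring A] (ι : F →+* A) (δ : A) (hA : IsDiffOpRing d A ι δ)
    {K : Type*} [DivisionRing K] (j : A →+* K) (hK : IsQuotientDivisionRing A K j)
    (R : Subring K)
    (hinner : ∀ x : K, x ≠ 0 → ∀ r ∈ R, x * r * x⁻¹ ∈ R)
    (hFR : Set.range (j.comp ι) ⊆ (R : Set K))
    (hRtop : R ≠ ⊤) :
    (R : Set K) = {f : K | ∃ P Q : A, P ≠ 0 ∧ f = (j P)⁻¹ * j Q ∧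
      ∀ m k : ℕ, HasDeg ι δ P m → HasDeg ι δ Q k → k ≤ m} := by
  obtain ⟨b, hb⟩ := exists_ne_zero_of_constants_ne_top hne
  have hF : ∀ a : F, j (ι a) ∈ R := fun a => hFR ⟨a, rfl⟩
  have hδ : j δ ∉ R := map_delta_notMem hA hK hinner hF hb hRtop
  ext f
  constructor
  · intro hf
    obtain ⟨P, Q, hP, rfl⟩ := hK.quot f
    refine ⟨P, Q, hP, rfl, fun m k hm hk => ?_⟩
    by_contra! hkm
    -- `P⁻¹ Q ∈ R` and `Q⁻¹ (P ∂) ∈ R` would give `∂ ∈ R`.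
    have hPδ : (j Q)⁻¹ * j (P * δ) ∈ R := inv_mul_mem_of_mem_degLT hA hK.inj hinner hF hb hk
      (degLT_mono (Nat.succ_le_succ hkm) hm.mul_delta.mem_degLT)
    refine hδ ?_
    have hP0 : j P ≠ 0 := (map_ne_zero_iff j hK.inj).2 hP
    have hQ0 : j Q ≠ 0 := (map_ne_zero_iff j hK.inj).2 (hA.hasDeg_ne_zero hk)
    rw [← inv_mul_cancel_left₀ hP0 (j δ), ← mul_inv_cancel_left₀ hQ0 (j P * j δ), ← mul_assoc,
      ← map_mul]
    exact mul_mem hf hPδ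
  · rintro ⟨P, Q, hP, rfl, hdeg⟩
    obtain rfl | hQ := eq_or_ne Q 0
    · simp
    obtain ⟨m, hm⟩ := hA.exists_hasDeg hP
    obtain ⟨k, hk⟩ := hA.exists_hasDeg hQ
    exact inv_mul_mem_of_mem_degLT hA hK.inj hinner hF hb hm
      (degLT_mono (Nat.succ_le_succ (hdeg m k hm hk)) hk.mem_degLT)

/-- The only valuation subring of `F(∂)` containing `F` and different from
`F(∂)` itself is `F(∂)_{≤0}`, the set of rational pseudo-differential operators of nonpositive
order: if `R` is a subring of `F(∂)` invariant under inner automorphisms such that for every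
nonzero `x`, `x ∈ R` or `x⁻¹ ∈ R`, and if `F ⊆ R` and `R ≠ F(∂)`, then
`R = {P⁻¹Q : deg Q ≤ deg P}`. -/
theorem valuation_subring_eq_nonpositive_order {F : Type*} [Field F] [CharZero F]
    (d : F → F) (hd : IsDerivation d)
    (halg : IsAlgClosed (constants F d hd))
    (hne : constants F d hd ≠ ⊤)
    {A : Type*} [Ring A] (ι : F →+* A) (δ : A) (hA : IsDiffOpRing d A ι δ)
    {K : Type*} [DivisionRing K] (j : A →+* K) (hK : IsQuotientDivisionRing A K j)
    (R : Subring K)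
    (hinner : ∀ x : K, x ≠ 0 → ∀ r ∈ R, x * r * x⁻¹ ∈ R)
    (hval : ∀ x : K, x ≠ 0 → x ∈ R ∨ x⁻¹ ∈ R)
    (hFR : Set.range (j.comp ι) ⊆ (R : Set K))
    (hRtop : R ≠ ⊤) :
    (R : Set K) = {f : K | ∃ P Q : A, P ≠ 0 ∧ f = (j P)⁻¹ * j Q ∧
      ∀ m k : ℕ, HasDeg ι δ P m → HasDeg ι δ Q k → k ≤ m} :=
  valuation_subring_eq_nonpositive_order_general d hd hne ι δ hA j hK R hinner hFR hRtop
end
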